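/- Let the hypotheses and moments in the context hold. Then: (i) (T00+T11)^2 > 4(T01)^2; (ii) the quadratic equation c^{-2}T01·u^2 − c^{-1}(T00+T11)·u + T01 = 0 has exactly one real solution u with |u| < c, given explicitly by u = c·(T00+T11 − sqrt((T00+T11)^2 − 4(T01)^2))/(2·T01) if T01 ≠ 0, and u = 0 if T01 = 0; (iii) for this u one has N0 − c^{-1}u·N1 > 0, so that ρ := c^{-1}·m·(N0 − c^{-1}u·N1)/sqrt(1 − c^{-2}u^2) > 0; and (iv) T00 − c^{-1}u·T01 > ρ·c^2. -/

import Mathlib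

/-!
Write `a = m c`, `E = √(p² + a²)` for the energy `p0` and `x = u / c`. Then (i) is the positivity of
`∫ (E ∓ p)² / E · f`, and the equation for `x` is the palindromic quadratic `T01 x² - S x + T01 = 0`
with `S = T00 + T11 > 2 |T01|`: its two roots are reciprocal, so exactly one lies in `(-1, 1)`.
(iii) is the positivity of `∫ (1 - x p / E) f`. For (iv), `(E - x p) / √(1 - x²)` is the energy of
the particle seen from the frame moving with velocity `x`, which exceeds the rest energy `a` except
at a single momentum. Integrating `(E - x p) (E - x p - a √(1 - x²)) / E` against `f` thus gives a
positive number, and the quadratic equation for `x` (the momentum density vanishes in the moving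
frame) identifies it with `√(1 - x²)` times the difference of the two sides of (iv).
-/

open MeasureTheory

lemma integral_mul_pos_of_ae_pos {α : Type*} [MeasurableSpace α] {μ : Measure α} {f g : α → ℝ}
    (hf : 0 ≤ᵐ[μ] f) (hf0 : ¬ f =ᵐ[μ] 0) (hg : ∀ᵐ x ∂μ, 0 < g x)
    (hgf : Integrable (fun x => g x * f x) μ) :
    0 < ∫ x, g x * f x ∂μ := by
  have hgf0 : 0 ≤ᵐ[μ] fun x => g x * f x := by
    filter_upwards [hf, hg] with x hfx hgx using mul_nonneg hgx.le hfx
  refine (integral_nonneg_of_ae hgf0).lt_of_ne fun h => hf0 ?_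
  filter_upwards [(integral_eq_zero_iff_of_nonneg_ae hgf0 hgf).1 h.symm, hg] with x hx hgx
  exact (mul_eq_zero.1 hx).resolve_left hgx.ne'

section Quadratic

/-- The root of `T x² - S x + T` in `(-1, 1)`, written rationalized so that `T = 0` needs no
special case. -/
noncomputable def smallRoot (S T : ℝ) : ℝ := 2 * T / (S + √(S ^ 2 - 4 * T ^ 2))

variable {S T : ℝ}

lemma four_mul_sq_lt_sq (hST : 2 * |T| < S) : 4 * T ^ 2 < S ^ 2 := by
  nlinarith [sq_abs T, abs_nonneg T]

lemma add_sqrt_pos (hST : 2 * |T| < S) : 0 < S + √(S ^ 2 - 4 * T ^ 2) := by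
  linarith [abs_nonneg T, Real.sqrt_nonneg (S ^ 2 - 4 * T ^ 2)]

lemma smallRoot_eq_ite (hST : 2 * |T| < S) :
    smallRoot S T = if T = 0 then 0 else (S - √(S ^ 2 - 4 * T ^ 2)) / (2 * T) := by
  split_ifs with hT
  · simp [smallRoot, hT]
  · rw [smallRoot, div_eq_div_iff (add_sqrt_pos hST).ne' (by simpa using hT)]
    linear_combination Real.sq_sqrt (sub_nonneg.2 ((four_mul_sq_lt_sq hST).le))

lemma abs_smallRoot_lt_one (hST : 2 * |T| < S) : |smallRoot S T| < 1 := by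
  have hE := add_sqrt_pos hST
  rw [smallRoot, abs_div, abs_of_pos hE, div_lt_one hE, abs_mul, abs_two]
  linarith [Real.sqrt_nonneg (S ^ 2 - 4 * T ^ 2)]

lemma quadratic_smallRoot_eq_zero (hST : 2 * |T| < S) :
    T * smallRoot S T ^ 2 - S * smallRoot S T + T = 0 := by
  have hD := Real.sq_sqrt (sub_nonneg.2 ((four_mul_sq_lt_sq hST).le))
  set E := S + √(S ^ 2 - 4 * T ^ 2) with hE_def
  have hE : E ≠ 0 := (add_sqrt_pos hST).ne'
  rw [smallRoot, ← hE_def]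
  field_simp
  linear_combination T * hD

lemma eq_of_quadratic_eq_zero_of_abs_lt_one (hST : 2 * |T| < S) {x y : ℝ} (hx : |x| < 1)
    (hy : |y| < 1) (hxr : T * x ^ 2 - S * x + T = 0) (hyr : T * y ^ 2 - S * y + T = 0) : x = y := by
  have hsum : T * (x + y) < S := calc
    T * (x + y) ≤ |T| * |x + y| := by rw [← abs_mul]; exact le_abs_self _
    _ ≤ |T| * 2 := by gcongr; linarith [abs_add_le x y]
    _ < S := by linarith
  have : (x - y) * (T * (x + y) - S) = 0 := by linear_combination hxr - hyr
  rcases mul_eq_zero.1 this with h | h <;> linarith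

end Quadratic

section Energy

/-- The energy `p0` of momentum `p` on the mass shell of mass `a` (`a = m c` in the theorem). -/
noncomputable def energy (a p : ℝ) : ℝ := √(p ^ 2 + a ^ 2)

variable {a p x : ℝ}

lemma sq_energy : energy a p ^ 2 = p ^ 2 + a ^ 2 := Real.sq_sqrt (by positivity)

lemma energy_nonneg : 0 ≤ energy a p := Real.sqrt_nonneg _

lemma energy_pos (ha : a ≠ 0) : 0 < energy a p := Real.sqrt_pos.2 (by positivity)

lemma abs_le_energy : |p| ≤ energy a p := Real.abs_le_sqrt (by nlinarith)

lemma abs_lt_energy (ha : a ≠ 0) : |p| < energy a p :=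
  (Real.lt_sqrt (abs_nonneg p)).2 (by rw [sq_abs]; exact lt_add_of_pos_right _ (by positivity))

lemma energy_le : energy a p ≤ (1 + a ^ 2) * (1 + p ^ 2) :=
  Real.sqrt_le_iff.2 ⟨by positivity, by
    nlinarith [sq_nonneg p, sq_nonneg a, mul_nonneg (sq_nonneg a) (sq_nonneg p)]⟩

lemma mul_lt_energy (ha : a ≠ 0) (hx : |x| ≤ 1) : x * p < energy a p := calc
  x * p ≤ |x| * |p| := by rw [← abs_mul]; exact le_abs_self _
  _ ≤ |p| := mul_le_of_le_one_left (abs_nonneg p) hx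
  _ < energy a p := abs_lt_energy ha

/-- Lorentz boost with velocity `x`: the boosted energy `(E - x p) / √(1 - x²)` is at least the rest
energy `a`, with equality only at zero boosted momentum `p = x E`, i.e. at `p = x a / √(1 - x²)`. -/
lemma mul_sqrt_lt_energy_sub_mul (ha : 0 < a) (hx : |x| < 1) (hp : p ≠ x * a / √(1 - x ^ 2)) :
    a * √(1 - x ^ 2) < energy a p - x * p := by
  have hx2 : 0 < 1 - x ^ 2 := sub_pos.2 ((sq_lt_one_iff_abs_lt_one x).2 hx)
  set s := √(1 - x ^ 2)
  set E := energy a p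
  have hs : 0 < s := Real.sqrt_pos.2 hx2
  have hs2 : s ^ 2 = 1 - x ^ 2 := Real.sq_sqrt hx2.le
  have hE2 : E ^ 2 = p ^ 2 + a ^ 2 := sq_energy
  have hE : 0 < E := energy_pos ha.ne'
  have hExp : 0 < E - x * p := sub_pos.2 (mul_lt_energy ha.ne' hx.le)
  have hboost : (E - x * p) ^ 2 - (a * s) ^ 2 = (x * E - p) ^ 2 := by
    linear_combination (1 - x ^ 2) * hE2 - a ^ 2 * hs2
  have hxE : x * E - p ≠ 0 := by
    intro h
    have hEs : (E * s) ^ 2 = a ^ 2 := by linear_combination E ^ 2 * hs2 + hE2 - (x * E + p) * h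
    have hEs' : E * s = a := (pow_left_inj₀ (mul_pos hE hs).le ha.le two_ne_zero).1 hEs
    exact hp ((eq_div_iff hs.ne').2 (by linear_combination x * hEs' - s * h))
  exact lt_of_pow_lt_pow_left₀ 2 hExp.le (sub_pos.1 (hboost ▸ sq_pos_of_ne_zero hxE))

end Energy

section Moments

variable {μ : Measure ℝ} {f : ℝ → ℝ}

lemma integrable_mul_of_abs_le (hint : Integrable (fun p => (1 + p ^ 2) * f p) μ) {g : ℝ → ℝ}
    (hg : Measurable g) {C : ℝ} (hbd : ∀ p, |g p| ≤ C * (1 + p ^ 2)) :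
    Integrable (fun p => g p * f p) μ := by
  have h1 : ∀ p : ℝ, 0 < 1 + p ^ 2 := fun p => by positivity
  have hsplit : (fun p => g p * f p) = fun p => g p / (1 + p ^ 2) * ((1 + p ^ 2) * f p) := by
    funext p; field_simp [(h1 p).ne']
  rw [hsplit]
  refine hint.bdd_mul (c := C) (hg.div (by fun_prop)).aestronglyMeasurable (.of_forall fun p => ?_)
  rw [Real.norm_eq_abs, abs_div, abs_of_pos (h1 p), div_le_iff₀ (h1 p)]
  exact hbd p

lemma integrable_of_integrable_one_add_sq_mul (hint : Integrable (fun p => (1 + p ^ 2) * f p) μ) :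
    Integrable f μ := by
  simpa using integrable_mul_of_abs_le hint (g := 1) measurable_const (C := 1)
    fun p => by simp; positivity

lemma integrable_id_mul (hint : Integrable (fun p => (1 + p ^ 2) * f p) μ) :
    Integrable (fun p => p * f p) μ :=
  integrable_mul_of_abs_le hint measurable_id (C := 1) fun p => by
    nlinarith [sq_abs p, sq_nonneg (|p| - 1)]

variable {a : ℝ}

lemma integrable_energy_mul (hint : Integrable (fun p => (1 + p ^ 2) * f p) μ) :
    Integrable (fun p => energy a p * f p) μ := by
  refine integrable_mul_of_abs_le hint (by unfold energy; fun_prop) (C := 1 + a ^ 2) fun p => ?_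
  rw [abs_of_nonneg energy_nonneg]
  exact energy_le

lemma integrable_mul_div_energy (hint : Integrable (fun p => (1 + p ^ 2) * f p) μ) :
    Integrable (fun p => p * f p / energy a p) μ := by
  simp_rw [mul_div_right_comm]
  refine integrable_mul_of_abs_le hint (by unfold energy; fun_prop) (C := 1) fun p => ?_
  rw [abs_div, abs_of_nonneg energy_nonneg]
  exact (div_le_one_of_le₀ abs_le_energy energy_nonneg).trans (by nlinarith [sq_nonneg p])

lemma integrable_sq_mul_div_energy (hint : Integrable (fun p => (1 + p ^ 2) * f p) μ) :
    Integrable (fun p => p ^ 2 * f p / energy a p) μ := by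
  simp_rw [mul_div_right_comm]
  refine integrable_mul_of_abs_le hint (by unfold energy; fun_prop) (C := 1 + a ^ 2) fun p => ?_
  rw [abs_of_nonneg (div_nonneg (sq_nonneg p) energy_nonneg)]
  refine (div_le_of_le_mul₀ energy_nonneg energy_nonneg ?_).trans energy_le
  nlinarith [sq_energy (a := a) (p := p), sq_nonneg a]

lemma moment_comb_mul_eq (α β γ δ ε p : ℝ) :
    (α + β * (p / energy a p) + γ * energy a p + δ * p + ε * (p ^ 2 / energy a p)) * f p
      = α * f p + β * (p * f p / energy a p) + γ * (energy a p * f p) + δ * (p * f p)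
        + ε * (p ^ 2 * f p / energy a p) := by
  ring

lemma integrable_moment_comb (hint : Integrable (fun p => (1 + p ^ 2) * f p) μ)
    (α β γ δ ε : ℝ) :
    Integrable (fun p =>
      (α + β * (p / energy a p) + γ * energy a p + δ * p + ε * (p ^ 2 / energy a p)) * f p) μ := by
  have := integrable_of_integrable_one_add_sq_mul hint
  have := integrable_id_mul hint
  have := integrable_energy_mul hint (a := a)
  have := integrable_mul_div_energy hint (a := a)
  have := integrable_sq_mul_div_energy hint (a := a)
  simp_rw [moment_comb_mul_eq]
  fun_prop

lemma integral_moment_comb (hint : Integrable (fun p => (1 + p ^ 2) * f p) μ)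
    (α β γ δ ε : ℝ) :
    ∫ p, (α + β * (p / energy a p) + γ * energy a p + δ * p + ε * (p ^ 2 / energy a p)) * f p ∂μ =
      α * (∫ p, f p ∂μ) + β * (∫ p, p * f p / energy a p ∂μ) + γ * (∫ p, energy a p * f p ∂μ)
        + δ * (∫ p, p * f p ∂μ) + ε * ∫ p, p ^ 2 * f p / energy a p ∂μ := by
  have := integrable_of_integrable_one_add_sq_mul hint
  have := integrable_id_mul hint
  have := integrable_energy_mul hint (a := a)
  have := integrable_mul_div_energy hint (a := a)
  have := integrable_sq_mul_div_energy hint (a := a)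
  simp_rw [moment_comb_mul_eq]
  rw [integral_add, integral_add, integral_add, integral_add, integral_const_mul,
    integral_const_mul, integral_const_mul, integral_const_mul, integral_const_mul]
  all_goals fun_prop

lemma two_mul_abs_integral_lt (hf : 0 ≤ᵐ[μ] f) (hf0 : ¬ f =ᵐ[μ] 0)
    (hint : Integrable (fun p => (1 + p ^ 2) * f p) μ) (ha : a ≠ 0) :
    2 * |∫ p, p * f p ∂μ| < ∫ p, energy a p * f p ∂μ + ∫ p, p ^ 2 * f p / energy a p ∂μ := by
  have hweighted : ∀ x : ℝ, |x| ≤ 1 → 0 < ∫ p, energy a p * f p ∂μ - 2 * x * ∫ p, p * f p ∂μ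
      + x ^ 2 * ∫ p, p ^ 2 * f p / energy a p ∂μ := by
    intro x hx
    have hg : ∀ p, (energy a p - x * p) ^ 2 / energy a p
        = 0 + 0 * (p / energy a p) + 1 * energy a p + (-2 * x) * p + x ^ 2 * (p ^ 2 / energy a p) :=
      fun p => by field_simp [(energy_pos ha (p := p)).ne']; ring
    have := integral_mul_pos_of_ae_pos hf hf0
      (g := fun p => (energy a p - x * p) ^ 2 / energy a p)
      (.of_forall fun p => div_pos (pow_pos (sub_pos.2 (mul_lt_energy ha hx)) 2) (energy_pos ha))
      (by simp_rw [hg]; exact integrable_moment_comb hint _ _ _ _ _)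
    simp_rw [hg, integral_moment_comb hint] at this
    linarith
  have h1 := hweighted 1 (by simp)
  have h2 := hweighted (-1) (by simp)
  have : |∫ p, p * f p ∂μ|
      < (∫ p, energy a p * f p ∂μ + ∫ p, p ^ 2 * f p / energy a p ∂μ) / 2 :=
    abs_lt.2 ⟨by linarith, by linarith⟩
  linarith

lemma integral_sub_mul_pos (hf : 0 ≤ᵐ[μ] f) (hf0 : ¬ f =ᵐ[μ] 0)
    (hint : Integrable (fun p => (1 + p ^ 2) * f p) μ) (ha : a ≠ 0) {x : ℝ} (hx : |x| ≤ 1) :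
    0 < ∫ p, f p ∂μ - x * ∫ p, p * f p / energy a p ∂μ := by
  have hg : ∀ p, 1 - x * (p / energy a p)
      = 1 + (-x) * (p / energy a p) + 0 * energy a p + 0 * p + 0 * (p ^ 2 / energy a p) :=
    fun p => by ring
  have := integral_mul_pos_of_ae_pos hf hf0 (g := fun p => 1 - x * (p / energy a p))
    (.of_forall fun p => sub_pos.2 ?_)
    (by simp_rw [hg]; exact integrable_moment_comb hint _ _ _ _ _)
  · simp_rw [hg, integral_moment_comb hint] at this
    linarith
  · rw [← mul_div_assoc, div_lt_one (energy_pos ha)]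
    exact mul_lt_energy ha hx

lemma mul_integral_sub_lt [NullSingletonClass μ] (hf : 0 ≤ᵐ[μ] f) (hf0 : ¬ f =ᵐ[μ] 0)
    (hint : Integrable (fun p => (1 + p ^ 2) * f p) μ) (ha : 0 < a) {x : ℝ} (hx : |x| < 1)
    (hroot : (∫ p, p * f p ∂μ) * x ^ 2
      - (∫ p, energy a p * f p ∂μ + ∫ p, p ^ 2 * f p / energy a p ∂μ) * x
      + ∫ p, p * f p ∂μ = 0) :
    a * (∫ p, f p ∂μ - x * ∫ p, p * f p / energy a p ∂μ)
      < √(1 - x ^ 2) * (∫ p, energy a p * f p ∂μ - x * ∫ p, p * f p ∂μ) := by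
  have hx2 : 0 < 1 - x ^ 2 := sub_pos.2 ((sq_lt_one_iff_abs_lt_one x).2 hx)
  set s := √(1 - x ^ 2)
  have hs : 0 < s := Real.sqrt_pos.2 hx2
  have hs2 : s ^ 2 = 1 - x ^ 2 := Real.sq_sqrt hx2.le
  have hg : ∀ p, (energy a p - x * p) * (energy a p - x * p - a * s) / energy a p
      = -(a * s) + a * s * x * (p / energy a p) + 1 * energy a p + (-2 * x) * p
        + x ^ 2 * (p ^ 2 / energy a p) :=
    fun p => by field_simp [(energy_pos ha.ne' (p := p)).ne']; ring
  have := integral_mul_pos_of_ae_pos hf hf0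
    (g := fun p => (energy a p - x * p) * (energy a p - x * p - a * s) / energy a p) ?_
    (by simp_rw [hg]; exact integrable_moment_comb hint _ _ _ _ _)
  · simp_rw [hg, integral_moment_comb hint] at this
    refine lt_of_sub_pos (pos_of_mul_pos_right (a := s) ?_ hs.le)
    linear_combination this - x * hroot
      - (∫ p, energy a p * f p ∂μ - x * ∫ p, p * f p ∂μ) * hs2
  · filter_upwards [μ.ae_ne (x * a / s)] with p hp
    have h1 := sub_pos.2 (mul_lt_energy ha.ne' hx.le (p := p))
    have h2 := sub_pos.2 (mul_sqrt_lt_energy_sub_mul ha hx hp)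
    exact div_pos (mul_pos h1 h2) (energy_pos ha.ne')

end Moments

theorem stmt0
    (m c : ℝ) (hm : 0 < m) (hc : 0 < c)
    (f : ℝ → ℝ) (hnn : ∀ p, 0 ≤ f p)
    (hne : ¬ (f =ᵐ[volume] (fun _ => (0 : ℝ))))
    (hint : Integrable (fun p => (1 + p ^ 2) * f p))
    (p0 : ℝ → ℝ) (hp0 : ∀ p, p0 p = Real.sqrt (p ^ 2 + m ^ 2 * c ^ 2))
    (N0 N1 T00 T01 T11 : ℝ)
    (hN0 : N0 = c * ∫ p, f p)
    (hN1 : N1 = c * ∫ p, p * f p / p0 p)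
    (hT00 : T00 = c * ∫ p, p0 p * f p)
    (hT01 : T01 = c * ∫ p, p * f p)
    (hT11 : T11 = c * ∫ p, p ^ 2 * f p / p0 p)
    (u : ℝ)
    (hu : u = if T01 = 0 then 0
      else c * (T00 + T11 - Real.sqrt ((T00 + T11) ^ 2 - 4 * T01 ^ 2)) / (2 * T01))
    (ρ : ℝ)
    (hρ : ρ = c⁻¹ * m * (N0 - c⁻¹ * u * N1) / Real.sqrt (1 - c⁻¹ ^ 2 * u ^ 2)) :
    (T00 + T11) ^ 2 > 4 * T01 ^ 2 ∧
    (|u| < c ∧ T01 * c⁻¹ ^ 2 * u ^ 2 - (T00 + T11) * c⁻¹ * u + T01 = 0) ∧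
    (∀ v : ℝ, |v| < c →
      T01 * c⁻¹ ^ 2 * v ^ 2 - (T00 + T11) * c⁻¹ * v + T01 = 0 → v = u) ∧
    0 < N0 - c⁻¹ * u * N1 ∧ 0 < ρ ∧ ρ * c ^ 2 < T00 - c⁻¹ * u * T01 := by
  obtain rfl : p0 = energy (m * c) := funext fun p => by rw [hp0, energy, mul_pow]
  have hf : 0 ≤ᵐ[volume] f := .of_forall hnn
  have ha : 0 < m * c := mul_pos hm hc
  have hS : 2 * |T01| < T00 + T11 := by
    have := mul_lt_mul_of_pos_left (two_mul_abs_integral_lt hf hne hint ha.ne') hc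
    rw [hT00, hT01, hT11, abs_mul, abs_of_pos hc]
    linarith
  have hu' : c⁻¹ * u = smallRoot (T00 + T11) T01 := by
    rw [hu, smallRoot_eq_ite hS, mul_ite, mul_zero, mul_div_assoc, inv_mul_cancel_left₀ hc.ne']
  have hx : |c⁻¹ * u| < 1 := hu' ▸ abs_smallRoot_lt_one hS
  have hroot := hu' ▸ quadratic_smallRoot_eq_zero hS
  have habs : ∀ v, |c⁻¹ * v| < 1 ↔ |v| < c := fun v => by
    rw [abs_mul, abs_of_pos (inv_pos.2 hc), inv_mul_lt_iff₀ hc, mul_one]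
  have hquad : ∀ v, T01 * c⁻¹ ^ 2 * v ^ 2 - (T00 + T11) * c⁻¹ * v + T01
      = T01 * (c⁻¹ * v) ^ 2 - (T00 + T11) * (c⁻¹ * v) + T01 := fun v => by ring
  set x := c⁻¹ * u
  have hN : N0 - x * N1 = c * ((∫ p, f p) - x * ∫ p, p * f p / energy (m * c) p) := by
    rw [hN0, hN1]; ring
  have hNpos : 0 < N0 - x * N1 := hN ▸ mul_pos hc (integral_sub_mul_pos hf hne hint ha.ne' hx.le)
  have hsqrt : √(1 - c⁻¹ ^ 2 * u ^ 2) = √(1 - x ^ 2) := by rw [mul_pow]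
  have hs : 0 < √(1 - x ^ 2) := Real.sqrt_pos.2 (sub_pos.2 ((sq_lt_one_iff_abs_lt_one x).2 hx))
  refine ⟨four_mul_sq_lt_sq hS, ⟨(habs u).1 hx, hquad u ▸ hroot⟩,
    fun v hv hvr => ?_, hNpos, ?_, ?_⟩
  · have := eq_of_quadratic_eq_zero_of_abs_lt_one hS ((habs v).2 hv) hx (hquad v ▸ hvr) hroot
    exact mul_left_cancel₀ (inv_ne_zero hc.ne') this
  · rw [hρ, hsqrt]
    exact div_pos (mul_pos (mul_pos (inv_pos.2 hc) hm) hNpos) hs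
  · have hrest := mul_integral_sub_lt hf hne hint ha hx <| mul_left_cancel₀ hc.ne' <| by
      rw [hT00, hT01, hT11] at hroot
      linear_combination hroot
    rw [hρ, hsqrt, hN, hT00, hT01, div_mul_eq_mul_div, div_lt_iff₀ hs]
    convert mul_lt_mul_of_pos_left hrest hc using 1 <;> field_simp
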